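/- In the controlled system with constant dose u, if 0 < u < r_H/λ then (K(1 − λu/r_H), 0) is an equilibrium, and the Jacobian there has eigenvalues λu − r_H and u(r_C λ − r_H μ)/r_H; both are strictly negative when u > 0, u < r_H/λ, and r_C/r_H < μ/λ. -/

import Mathlib

open Real Filter

/-!
On the tumour-free axis `C = 0` the second component vanishes identically and the first is
logistic growth with net rate `rH - λu`, whose positive zero is `H = K (1 - λu/rH)`. Because
`C = 0` there, the Jacobian is upper triangular, so its eigenvalues are its diagonal entries
`λu - rH` and `rC (1 - λu/rH) - μu = u (rC λ - rH μ)/rH`.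
-/

noncomputable def controlledField (rH rC K γ lam mu u : ℝ) (p : ℝ × ℝ) : ℝ × ℝ :=
  (rH * (1 - (p.1 + p.2) / K) * p.1 - γ * p.1 * p.2 - lam * u * p.1,
   rC * (1 - (p.1 + p.2) / K) * p.2 - mu * u * p.2)

section

variable {rH rC K γ lam mu u : ℝ}

open ContinuousLinearMap in
theorem hasFDerivAt_controlledField (p : ℝ × ℝ) :
    HasFDerivAt (controlledField rH rC K γ lam mu u)
      (((rH * (1 - (p.1 + p.2) / K) - rH * p.1 / K - γ * p.2 - lam * u) • fst ℝ ℝ ℝ +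
          (-(rH * p.1 / K) - γ * p.1) • snd ℝ ℝ ℝ).prod
        ((-(rC * p.2 / K)) • fst ℝ ℝ ℝ +
          (rC * (1 - (p.1 + p.2) / K) - rC * p.2 / K - mu * u) • snd ℝ ℝ ℝ)) p := by
  have hH : HasFDerivAt (fun q : ℝ × ℝ => q.1) (fst ℝ ℝ ℝ) p := hasFDerivAt_fst
  have hC : HasFDerivAt (fun q : ℝ × ℝ => q.2) (snd ℝ ℝ ℝ) p := hasFDerivAt_snd
  have hlogistic := (hasFDerivAt_const (1 : ℝ) p).sub ((hH.add hC).mul_const K⁻¹)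
  refine HasFDerivAt.prodMk ?_ ?_
  · refine ((((hlogistic.const_mul rH).mul hH).sub ((hH.const_mul γ).mul hC)).sub
      (hH.const_mul (lam * u))).congr_fderiv ?_
    ext <;> simp <;> ring
  · refine (((hlogistic.const_mul rC).mul hC).sub (hC.const_mul (mu * u))).congr_fderiv ?_
    ext <;> simp <;> ring

theorem controlledField_healthy_eq_zero (hK : K ≠ 0) (hrH : rH ≠ 0) :
    controlledField rH rC K γ lam mu u (K * (1 - lam * u / rH), 0) = 0 := by
  simp only [controlledField, Prod.mk_eq_zero, add_zero, mul_zero, sub_zero, and_true]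
  field_simp
  ring

open ContinuousLinearMap in
theorem hasFDerivAt_controlledField_healthy (hK : K ≠ 0) (hrH : rH ≠ 0) :
    HasFDerivAt (controlledField rH rC K γ lam mu u)
      (((lam * u - rH) • fst ℝ ℝ ℝ +
          (-(rH * (K * (1 - lam * u / rH)) / K) - γ * (K * (1 - lam * u / rH))) •
            snd ℝ ℝ ℝ).prod
        ((u * (rC * lam - rH * mu) / rH) • snd ℝ ℝ ℝ))
      (K * (1 - lam * u / rH), 0) :=
  (hasFDerivAt_controlledField _).congr_fderiv <| by
    ext <;> simp <;> field_simp <;> ring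

theorem healthy_tangent_eigenvalue_neg (hlam : 0 < lam) (hu : u < rH / lam) : lam * u - rH < 0 :=
  sub_neg.mpr ((lt_div_iff₀' hlam).mp hu)

theorem healthy_transverse_eigenvalue_neg (hrH : 0 < rH) (hlam : 0 < lam) (hu : 0 < u)
    (h : rC / rH < mu / lam) : u * (rC * lam - rH * mu) / rH < 0 := by
  have hrate : rC * lam < mu * rH := (div_lt_div_iff₀ hrH hlam).mp h
  exact div_neg_of_neg_of_pos (mul_neg_of_pos_of_neg hu (by linarith)) hrH

end

theorem controlled_healthy_equilibrium_general
    (rH rC K γ lam mu u : ℝ)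
    (hrH : 0 < rH) (hK : 0 < K)
    (hlam : 0 < lam)
    (hu : 0 < u) (hu2 : u < rH / lam)
    (F : ℝ × ℝ → ℝ × ℝ)
    (hF : ∀ p : ℝ × ℝ,
      F p = (rH * (1 - (p.1 + p.2) / K) * p.1 - γ * p.1 * p.2 - lam * u * p.1,
             rC * (1 - (p.1 + p.2) / K) * p.2 - mu * u * p.2)) :
    F (K * (1 - lam * u / rH), 0) = 0 ∧
    HasFDerivAt F
      (((lam * u - rH) • ContinuousLinearMap.fst ℝ ℝ ℝ +
          (-(rH * (K * (1 - lam * u / rH)) / K) - γ * (K * (1 - lam * u / rH))) •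
            ContinuousLinearMap.snd ℝ ℝ ℝ).prod
        ((u * (rC * lam - rH * mu) / rH) • ContinuousLinearMap.snd ℝ ℝ ℝ))
      (K * (1 - lam * u / rH), 0) ∧
    (rC / rH < mu / lam → lam * u - rH < 0 ∧ u * (rC * lam - rH * mu) / rH < 0) := by
  obtain rfl : F = controlledField rH rC K γ lam mu u := funext hF
  exact ⟨controlledField_healthy_eq_zero hK.ne' hrH.ne',
    hasFDerivAt_controlledField_healthy hK.ne' hrH.ne',
    fun h => ⟨healthy_tangent_eigenvalue_neg hlam hu2, healthy_transverse_eigenvalue_neg hrH hlam hu h⟩⟩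

theorem controlled_healthy_equilibrium
    (rH rC K γ lam mu u : ℝ)
    (hrH : 0 < rH) (hrC : 0 < rC) (hK : 0 < K) (hγ : 0 < γ)
    (hlam : 0 < lam) (hlam1 : lam ≤ 1) (hmu : 0 < mu) (hmu1 : mu ≤ 1) (hlm : lam < mu)
    (hu : 0 < u) (hu2 : u < rH / lam)
    (F : ℝ × ℝ → ℝ × ℝ)
    (hF : ∀ p : ℝ × ℝ,
      F p = (rH * (1 - (p.1 + p.2) / K) * p.1 - γ * p.1 * p.2 - lam * u * p.1,
             rC * (1 - (p.1 + p.2) / K) * p.2 - mu * u * p.2)) :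
    F (K * (1 - lam * u / rH), 0) = 0 ∧
    HasFDerivAt F
      (((lam * u - rH) • ContinuousLinearMap.fst ℝ ℝ ℝ +
          (-(rH * (K * (1 - lam * u / rH)) / K) - γ * (K * (1 - lam * u / rH))) •
            ContinuousLinearMap.snd ℝ ℝ ℝ).prod
        ((u * (rC * lam - rH * mu) / rH) • ContinuousLinearMap.snd ℝ ℝ ℝ))
      (K * (1 - lam * u / rH), 0) ∧
    (rC / rH < mu / lam → lam * u - rH < 0 ∧ u * (rC * lam - rH * mu) / rH < 0) :=
  controlled_healthy_equilibrium_general rH rC K γ lam mu u hrH hK hlam hu hu2 F hF
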